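/- Let r ≥ 1 and Δ_1, …, Δ_r > 0. Let X be an ℝ^r-valued random vector with density f_X, and define f_Y(y) = (∏_{i=1}^r 1/Δ_i) · ∫_{∏_{i=1}^r [y_i − Δ_i/2, y_i + Δ_i/2]} f_X(x) dx. Assume that f_Y · log₂ f_Y is Lebesgue integrable over ℝ^r (with the convention 0·log 0 = 0). For ξ in the box B = ∏_{i=1}^r [−Δ_i/2, Δ_i/2] and k ∈ ℤ^r, let P(k | ξ) = (∏_{i=1}^r Δ_i) · f_Y(q̃^k − ξ), where q̃^k = (k_1Δ_1, …, k_rΔ_r). Then (∏_{i=1}^r 1/Δ_i) · ∫_B ( − ∑_{k ∈ ℤ^r} P(k | ξ) log₂ P(k | ξ) ) dξ = − ∫_{ℝ^r} f_Y(y) log₂ f_Y(y) dy − ∑_{i=1}^r log₂ Δ_i. -/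

import Mathlib

/-
Write `g y = f_Y y · log₂ ((∏ i, Δ i) · f_Y y)`, so that
`P(k | ξ) log₂ P(k | ξ) = (∏ i, Δ i) · g (q̃^k − ξ)`. The translates `q̃^k − B`, `k ∈ ℤ^r`,
tile `ℝ^r` up to null sets, hence integrating `∑_k g (q̃^k − ξ)` over `ξ ∈ B` gives `∫ g`.
Since `f_Y` is `∏ i, 1/Δ i` times the convolution of `f_X` with the indicator of `B`, it has
the same total mass `1` as `f_X`, and so `∫ g = ∫ f_Y log₂ f_Y + ∑ i, log₂ Δ i`.
-/

open MeasureTheory ProbabilityTheory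
open scoped ENNReal Convolution

/-- The density of `Y = X + N` for `X` with density `fX` and `N` an independent noise
vector with independent coordinates uniform on `[-Δ i/2, Δ i/2]`:
`f_Y(y) = (∏ i, 1/Δ i) · ∫_{∏ i [y i − Δ i/2, y i + Δ i/2]} fX(x) dx`. -/
noncomputable def smoothedDensity {r : ℕ} (Δ : Fin r → ℝ) (fX : (Fin r → ℝ) → ℝ)
    (y : Fin r → ℝ) : ℝ :=
  (∏ i, (Δ i)⁻¹) * ∫ x in Set.Icc (fun i => y i - Δ i / 2) (fun i => y i + Δ i / 2), fX x

/-- The conditional probability mass function of the dithered quantizer output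
`q̃^k = (k 1 · Δ 1, …, k r · Δ r)` given the dither value `ξ`:
`P(k | ξ) = (∏ i, Δ i) · f_Y(q̃^k − ξ)`. -/
noncomputable def quantizerPMF {r : ℕ} (Δ : Fin r → ℝ) (fX : (Fin r → ℝ) → ℝ)
    (k : Fin r → ℤ) (ξ : Fin r → ℝ) : ℝ :=
  (∏ i, Δ i) * smoothedDensity Δ fX ((fun i => (k i : ℝ) * Δ i) - ξ)

theorem integrable_and_integral_eq_one_of_map_eq_withDensity {Ω α : Type*} [MeasurableSpace Ω]
    [MeasurableSpace α] {P : Measure Ω} [IsProbabilityMeasure P] {μ : Measure α} {X : Ω → α}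
    (hX : Measurable X) {f : α → ℝ} (hf : Measurable f) (hf0 : ∀ x, 0 ≤ f x)
    (hXf : P.map X = μ.withDensity fun x => ENNReal.ofReal (f x)) :
    Integrable f μ ∧ ∫ x, f x ∂μ = 1 := by
  have hmass : ∫⁻ x, ENNReal.ofReal (f x) ∂μ = 1 := by
    have := congrArg (· Set.univ) hXf
    simp only [Measure.map_apply hX MeasurableSet.univ, Set.preimage_univ, measure_univ,
      withDensity_apply _ MeasurableSet.univ, Measure.restrict_univ] at this
    exact this.symm
  have hf0' : 0 ≤ᵐ[μ] f := Filter.Eventually.of_forall hf0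
  have hfin : HasFiniteIntegral f μ := (hasFiniteIntegral_iff_ofReal hf0').2 (by simp [hmass])
  refine ⟨⟨hf.aestronglyMeasurable, hfin⟩, ?_⟩
  rw [integral_eq_lintegral_of_nonneg_ae hf0' hf.aestronglyMeasurable, hmass, ENNReal.toReal_one]

section Smoothing

variable {r : ℕ} {Δ : Fin r → ℝ}

theorem smoothedDensity_eq_convolution (f : (Fin r → ℝ) → ℝ) (y : Fin r → ℝ) :
    smoothedDensity Δ f y = (∏ i, (Δ i)⁻¹) *
      (f ⋆[ContinuousLinearMap.lsmul ℝ ℝ] (Set.Icc (-(Δ / 2)) (Δ / 2)).indicator 1) y := by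
  have hwindow : Set.Icc (fun i => y i - Δ i / 2) (fun i => y i + Δ i / 2)
      = (y - ·) ⁻¹' Set.Icc (-(Δ / 2)) (Δ / 2) := by
    rw [Set.preimage_const_sub_Icc, sub_neg_eq_add]
    rfl
  rw [smoothedDensity, convolution_def, ← integral_indicator measurableSet_Icc, hwindow]
  congr 2 with x
  by_cases hx : y - x ∈ Set.Icc (-(Δ / 2)) (Δ / 2)
  · rw [Set.indicator_of_mem hx, Set.indicator_of_mem (Set.mem_preimage.2 hx)]
    simp
  · rw [Set.indicator_of_notMem hx, Set.indicator_of_notMem (mt Set.mem_preimage.1 hx)]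
    simp

theorem integrable_indicator_Icc_one {ι : Type*} [Fintype ι] (a b : ι → ℝ) :
    Integrable ((Set.Icc a b).indicator (1 : (ι → ℝ) → ℝ)) :=
  (integrable_indicator_iff measurableSet_Icc).2
    (integrableOn_const isCompact_Icc.measure_lt_top.ne)

theorem integrable_smoothedDensity {f : (Fin r → ℝ) → ℝ} (hf : Integrable f) :
    Integrable (smoothedDensity Δ f) := by
  rw [funext (smoothedDensity_eq_convolution f)]
  exact (hf.integrable_convolution _ (integrable_indicator_Icc_one _ _)).const_mul _

theorem integral_smoothedDensity (hΔ : ∀ i, 0 < Δ i) {f : (Fin r → ℝ) → ℝ}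
    (hf : Integrable f) :
    ∫ y, smoothedDensity Δ f y = ∫ x, f x := by
  rw [funext (smoothedDensity_eq_convolution f)]
  have hbox : ∫ x, (Set.Icc (-(Δ / 2)) (Δ / 2)).indicator 1 x = ∏ i, Δ i := by
    rw [integral_indicator_one measurableSet_Icc, measureReal_def, Real.volume_Icc_pi,
      ENNReal.toReal_prod]
    refine Finset.prod_congr rfl fun i _ => ?_
    simp [ENNReal.toReal_ofReal (hΔ i).le]
  rw [integral_const_mul, integral_convolution _ hf (integrable_indicator_Icc_one _ _), hbox,
    ContinuousLinearMap.lsmul_apply, smul_eq_mul, ← mul_assoc, mul_right_comm,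
    Finset.prod_inv_distrib, inv_mul_cancel₀ (Finset.prod_ne_zero_iff.2 fun i _ => (hΔ i).ne'),
    one_mul]

end Smoothing

section Lattice

variable {ι E : Type*} [NormedAddCommGroup E] [NormedSpace ℝ E] {Δ : ι → ℝ}

def latticePoint (Δ : ι → ℝ) (k : ι → ℤ) : ι → ℝ := fun i => (k i : ℝ) * Δ i

def latticeCell (Δ : ι → ℝ) (k : ι → ℤ) : Set (ι → ℝ) :=
  Set.Icc (latticePoint Δ k - Δ / 2) (latticePoint Δ k + Δ / 2)

theorem iUnion_latticeCell (hΔ : ∀ i, 0 < Δ i) : ⋃ k, latticeCell Δ k = Set.univ := by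
  refine Set.eq_univ_of_forall fun y => Set.mem_iUnion.2 ⟨fun i => round (y i / Δ i), ?_⟩
  have hround (i : ι) : |y i - round (y i / Δ i) * Δ i| ≤ Δ i / 2 := by
    have hy : y i - round (y i / Δ i) * Δ i = (y i / Δ i - round (y i / Δ i)) * Δ i := by
      rw [sub_mul, div_mul_cancel₀ _ (hΔ i).ne']
    rw [hy, abs_mul, abs_of_pos (hΔ i)]
    linarith [mul_le_mul_of_nonneg_right (abs_sub_round (y i / Δ i)) (hΔ i).le]
  constructor <;> intro i <;>
  · have := abs_le.1 (hround i)
    simp only [latticePoint, Pi.add_apply, Pi.sub_apply, Pi.div_apply, Pi.ofNat_apply]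
    linarith

theorem latticePoint_add_le_sub {k k' : ι → ℤ} {i : ι} (hΔ : 0 < Δ i) (h : k i < k' i) :
    (latticePoint Δ k + Δ / 2) i ≤ (latticePoint Δ k' - Δ / 2) i := by
  have : (k i : ℝ) + 1 ≤ k' i := by exact_mod_cast h
  simp only [latticePoint, Pi.add_apply, Pi.sub_apply, Pi.div_apply, Pi.ofNat_apply]
  nlinarith

theorem pairwise_aedisjoint_latticeCell [Fintype ι] (hΔ : ∀ i, 0 < Δ i) :
    Pairwise (Function.onFun (AEDisjoint volume) (latticeCell Δ)) := by
  intro k k' hk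
  obtain ⟨i, hi⟩ := Function.ne_iff.1 hk
  change volume (latticeCell Δ k ∩ latticeCell Δ k') = 0
  rw [latticeCell, latticeCell, Set.Icc_inter_Icc, Real.volume_Icc_pi]
  refine Finset.prod_eq_zero (Finset.mem_univ i) (ENNReal.ofReal_eq_zero.2 ?_)
  rw [Pi.inf_apply, Pi.sup_apply, sub_nonpos]
  rcases lt_or_gt_of_ne hi with h | h
  · exact inf_le_left.trans ((latticePoint_add_le_sub (hΔ i) h).trans le_sup_right)
  · exact inf_le_right.trans ((latticePoint_add_le_sub (hΔ i) h).trans le_sup_left)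

theorem image_sub_Icc_eq_latticeCell (k : ι → ℤ) :
    (latticePoint Δ k - ·) '' Set.Icc (-(Δ / 2)) (Δ / 2) = latticeCell Δ k := by
  rw [Set.image_const_sub_Icc, sub_neg_eq_add, latticeCell]

theorem setLIntegral_Icc_comp_sub_latticePoint [Fintype ι] (k : ι → ℤ) (g : (ι → ℝ) → ℝ≥0∞) :
    ∫⁻ ξ in Set.Icc (-(Δ / 2)) (Δ / 2), g (latticePoint Δ k - ξ)
      = ∫⁻ y in latticeCell Δ k, g y := by
  rw [(Measure.measurePreserving_sub_left volume _).setLIntegral_comp_emb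
    (MeasurableEquiv.subLeft _).measurableEmbedding, image_sub_Icc_eq_latticeCell]

theorem setIntegral_Icc_comp_sub_latticePoint [Fintype ι] (k : ι → ℤ) (h : (ι → ℝ) → E) :
    ∫ ξ in Set.Icc (-(Δ / 2)) (Δ / 2), h (latticePoint Δ k - ξ)
      = ∫ y in latticeCell Δ k, h y := by
  rw [← (Measure.measurePreserving_sub_left volume _).setIntegral_image_emb
    (MeasurableEquiv.subLeft _).measurableEmbedding, image_sub_Icc_eq_latticeCell]

theorem integral_tsum_comp_sub_latticePoint [Fintype ι] (hΔ : ∀ i, 0 < Δ i) {h : (ι → ℝ) → E}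
    (hh : Integrable h) :
    ∫ ξ in Set.Icc (-(Δ / 2)) (Δ / 2), ∑' k : ι → ℤ, h (latticePoint Δ k - ξ) = ∫ y, h y := by
  have hcell_meas (k : ι → ℤ) : NullMeasurableSet (latticeCell Δ k) :=
    measurableSet_Icc.nullMeasurableSet
  have hmeas (k : ι → ℤ) : AEStronglyMeasurable (fun ξ => h (latticePoint Δ k - ξ))
      (volume.restrict (Set.Icc (-(Δ / 2)) (Δ / 2))) :=
    (hh.aestronglyMeasurable.comp_measurePreserving
      (Measure.measurePreserving_sub_left volume _)).restrict
  have hsummable : ∑' k : ι → ℤ, ∫⁻ ξ in Set.Icc (-(Δ / 2)) (Δ / 2),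
      ‖h (latticePoint Δ k - ξ)‖ₑ ≠ ⊤ := by
    simp_rw [setLIntegral_Icc_comp_sub_latticePoint _ (fun y => ‖h y‖ₑ)]
    rw [← lintegral_iUnion₀ hcell_meas (pairwise_aedisjoint_latticeCell hΔ),
      iUnion_latticeCell hΔ, Measure.restrict_univ]
    exact hh.hasFiniteIntegral.ne
  rw [integral_tsum hmeas hsummable]
  simp_rw [setIntegral_Icc_comp_sub_latticePoint]
  rw [← integral_iUnion_ae hcell_meas (pairwise_aedisjoint_latticeCell hΔ)
    (by rw [iUnion_latticeCell hΔ]; exact hh.integrableOn), iUnion_latticeCell hΔ,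
    Measure.restrict_univ]

end Lattice

theorem mul_logb_const_mul (b : ℝ) {c : ℝ} (hc : c ≠ 0) (x : ℝ) :
    x * Real.logb b (c * x) = x * Real.logb b x + Real.logb b c * x := by
  rcases eq_or_ne x 0 with rfl | hx
  · simp
  · rw [Real.logb_mul hc hx]
    ring

theorem stmt_6_general {Ω : Type*} [MeasurableSpace Ω] (P : Measure Ω) [IsProbabilityMeasure P]
    (r : ℕ) (Δ : Fin r → ℝ) (hΔ : ∀ i, 0 < Δ i)
    (X : Ω → Fin r → ℝ) (hX : Measurable X)
    (fX : (Fin r → ℝ) → ℝ) (hfX : Measurable fX) (hfX0 : ∀ x, 0 ≤ fX x)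
    (hXdens : Measure.map X P = volume.withDensity fun x => ENNReal.ofReal (fX x))
    (hint : Integrable
      (fun y => smoothedDensity Δ fX y * Real.logb 2 (smoothedDensity Δ fX y)) volume) :
    (∏ i, (Δ i)⁻¹) *
        ∫ ξ in Set.Icc (fun i => -(Δ i / 2)) (fun i => Δ i / 2),
          (- ∑' k : Fin r → ℤ,
              quantizerPMF Δ fX k ξ * Real.logb 2 (quantizerPMF Δ fX k ξ))
      = (- ∫ y, smoothedDensity Δ fX y * Real.logb 2 (smoothedDensity Δ fX y))
          - ∑ i, Real.logb 2 (Δ i) := by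
  obtain ⟨hfX_int, hfX_one⟩ :=
    integrable_and_integral_eq_one_of_map_eq_withDensity hX hfX hfX0 hXdens
  have hfY_int := integrable_smoothedDensity (Δ := Δ) hfX_int
  have hΔprod : ∏ i, Δ i ≠ 0 := Finset.prod_ne_zero_iff.2 fun i _ => (hΔ i).ne'
  set fY := smoothedDensity Δ fX
  set g : (Fin r → ℝ) → ℝ := fun y => fY y * Real.logb 2 ((∏ i, Δ i) * fY y)
  have hg_split :
      g = (fun y => fY y * Real.logb 2 (fY y)) + fun y => Real.logb 2 (∏ i, Δ i) * fY y :=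
    funext fun y => mul_logb_const_mul 2 hΔprod (fY y)
  have hterm (k : Fin r → ℤ) (ξ : Fin r → ℝ) :
      quantizerPMF Δ fX k ξ * Real.logb 2 (quantizerPMF Δ fX k ξ)
        = (∏ i, Δ i) * g (latticePoint Δ k - ξ) :=
    mul_assoc _ _ _
  simp_rw [hterm, tsum_mul_left]
  change _ * ∫ ξ in Set.Icc (-(Δ / 2)) (Δ / 2), _ = _
  rw [integral_neg, integral_const_mul, integral_tsum_comp_sub_latticePoint hΔ
    (hg_split ▸ hint.add (hfY_int.const_mul _)), hg_split, integral_add' hint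
    (hfY_int.const_mul _), integral_const_mul, integral_smoothedDensity hΔ hfX_int, hfX_one,
    Real.logb_prod _ _ fun i _ => (hΔ i).ne', Finset.prod_inv_distrib]
  field_simp
  ring

/-- The conditional entropy of the dithered quantizer output given a dither uniformly
distributed on the box `B = ∏ i [-Δ i/2, Δ i/2]` equals the differential entropy of
`Y = X + N` minus `∑ i, log₂ Δ i`:
`(∏ i, 1/Δ i) · ∫_B (−∑_k P(k|ξ) log₂ P(k|ξ)) dξ = −∫ f_Y log₂ f_Y − ∑ i log₂ Δ i`. -/
theorem stmt_6 {Ω : Type*} [MeasurableSpace Ω] (P : Measure Ω) [IsProbabilityMeasure P]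
    (r : ℕ) (hr : 1 ≤ r) (Δ : Fin r → ℝ) (hΔ : ∀ i, 0 < Δ i)
    (X : Ω → Fin r → ℝ) (hX : Measurable X)
    (fX : (Fin r → ℝ) → ℝ) (hfX : Measurable fX) (hfX0 : ∀ x, 0 ≤ fX x)
    (hXdens : Measure.map X P = volume.withDensity fun x => ENNReal.ofReal (fX x))
    (hint : Integrable
      (fun y => smoothedDensity Δ fX y * Real.logb 2 (smoothedDensity Δ fX y)) volume) :
    (∏ i, (Δ i)⁻¹) *
        ∫ ξ in Set.Icc (fun i => -(Δ i / 2)) (fun i => Δ i / 2),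
          (- ∑' k : Fin r → ℤ,
              quantizerPMF Δ fX k ξ * Real.logb 2 (quantizerPMF Δ fX k ξ))
      = (- ∫ y, smoothedDensity Δ fX y * Real.logb 2 (smoothedDensity Δ fX y))
          - ∑ i, Real.logb 2 (Δ i) :=
  stmt_6_general P r Δ hΔ X hX fX hfX hfX0 hXdens hint
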